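/- arXiv:1105.1838 — 3 statements merged into one kernel-verified Lean document; each statement's English description precedes it below -/
import Mathlib

section
/- For integers 0 ≤ k ≤ n and α, β > -1, ∫₀¹ x^α (1-x)^β P_{nk}^{(α,β)}(x) dx = (Γ(α+k+1)/k!) · (Γ(β+n-k+1)/(n-k)!) · (n!/Γ(α+β+n+2)). -/
open Real MeasureTheory

/-- Falling factorial `(a)_m = a (a-1) ⋯ (a-m+1)` for real `a`. -/
noncomputable def ffall (a : ℝ) (m : ℕ) : ℝ := ∏ i ∈ Finset.range m, (a - i)

/-- Alternative Jacobi polynomials defined by the Rodrigues-type formula. -/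
noncomputable def altJacobi (α β : ℝ) (n k : ℕ) (x : ℝ) : ℝ :=
  x ^ (-α - k - 1 : ℝ) * (1 - x) ^ (-β : ℝ) / (n - k).factorial *
    iteratedDeriv (n - k)
      (fun y : ℝ => y ^ (α + n + k + 1 : ℝ) * (1 - y) ^ (β + n - k : ℝ)) x

/-
Leibniz' rule expands the `m`-th derivative (`m = n - k`) of `x ^ a * (1 - x) ^ b`, where
`a = α + n + k + 1` and `b = β + n - k`, into falling factorials times
`x ^ (a - i) * (1 - x) ^ (b - j)`, `i + j = m`; after multiplication by the weight each term is a
Beta integral. Writing `(-1) ^ j * Γ(c + j) = (-c)_j * Γ(c)` with `c = α + k + 1`, the sum becomes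
`Γ(c) Γ(b + 1) / Γ(α + β + n + 2)` times `∑ (m choose i) (a)_i (-c)_j`, which Chu–Vandermonde
collapses to `(a - c)_m = (n)_m = n! / k!`. The falling factorial `(r)_m` is Mathlib's
`(descPochhammer ℝ m).eval r`.
-/

open Polynomial Finset Set

lemma descPochhammer_int_smeval {R : Type*} [CommRing R] (r : R) (m : ℕ) :
    (descPochhammer ℤ m).smeval r = (descPochhammer R m).eval r := by
  rw [← descPochhammer_map (algebraMap ℤ R), eval_map, ← aeval_def, aeval_eq_smeval]

lemma descPochhammer_eval_add {R : Type*} [CommRing R] (r s : R) (m : ℕ) :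
    (descPochhammer R m).eval (r + s) = ∑ ij ∈ antidiagonal m,
      m.choose ij.1 * ((descPochhammer R ij.1).eval r * (descPochhammer R ij.2).eval s) := by
  simpa only [descPochhammer_int_smeval] using Ring.descPochhammer_smeval_add m (Commute.all r s)

lemma iteratedDeriv_rpow_const (r : ℝ) (m : ℕ) :
    iteratedDeriv m (fun y : ℝ => y ^ r) =
      fun x => (descPochhammer ℝ m).eval r * x ^ (r - m) := by
  rw [iteratedDeriv_eq_iterate]
  exact funext (iter_deriv_rpow_const r · m)

lemma iteratedDeriv_one_sub_rpow_const (r : ℝ) (m : ℕ) :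
    iteratedDeriv m (fun y : ℝ => (1 - y) ^ r) =
      fun x => (-1) ^ m * (descPochhammer ℝ m).eval r * (1 - x) ^ (r - m) := by
  rw [iteratedDeriv_comp_const_sub m (fun y : ℝ => y ^ r) 1, iteratedDeriv_rpow_const]
  simp only [smul_eq_mul, mul_assoc]

lemma Gamma_add_one_eq_descPochhammer_mul {z : ℝ} {l : ℕ} (h : 0 < z - l + 1) :
    Gamma (z + 1) = (descPochhammer ℝ l).eval z * Gamma (z - l + 1) := by
  induction l with
  | zero => simp
  | succ l ih =>
    push_cast at h
    rw [ih (by linarith), descPochhammer_succ_right, eval_mul, eval_sub, eval_X, eval_natCast,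
      show z - l + 1 = z - (l + 1 : ℕ) + 1 + 1 by push_cast; ring,
      Gamma_add_one (by push_cast; linarith)]
    push_cast; ring

lemma neg_one_pow_mul_Gamma_add_nat {c : ℝ} (hc : 0 < c) (j : ℕ) :
    (-1) ^ j * Gamma (c + j) = (descPochhammer ℝ j).eval (-c) * Gamma c := by
  have hc' : c + j - 1 - j + 1 = c := by ring
  calc (-1) ^ j * Gamma (c + j)
      = (-1) ^ j * ((descPochhammer ℝ j).eval (c + j - 1) * Gamma c) := by
        have h := Gamma_add_one_eq_descPochhammer_mul (z := c + j - 1) (l := j)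
          (by rw [hc']; exact hc)
        rw [hc', sub_add_cancel] at h
        rw [h]
    _ = (-1) ^ j * (ascPochhammer ℝ j).eval (-(-c)) * Gamma c := by
        rw [descPochhammer_eval_eq_ascPochhammer, hc', neg_neg, mul_assoc]
    _ = (descPochhammer ℝ j).eval (-c) * Gamma c := by
        rw [ascPochhammer_eval_neg_eq_descPochhammer, ← mul_assoc, ← pow_add, ← two_mul,
          pow_mul, neg_one_sq, one_pow, one_mul]

lemma ofReal_rpow_mul_one_sub_rpow {p q x : ℝ} (hx : x ∈ Icc (0 : ℝ) 1) :
    ((x ^ p * (1 - x) ^ q : ℝ) : ℂ) =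
      (x : ℂ) ^ ((p + 1 : ℂ) - 1) * (1 - (x : ℂ)) ^ ((q + 1 : ℂ) - 1) := by
  rw [add_sub_cancel_right, add_sub_cancel_right, Complex.ofReal_mul, Complex.ofReal_cpow hx.1,
    Complex.ofReal_cpow (sub_nonneg.2 hx.2), Complex.ofReal_sub, Complex.ofReal_one]

lemma intervalIntegrable_rpow_mul_one_sub_rpow {p q : ℝ} (hp : -1 < p) (hq : -1 < q) :
    IntervalIntegrable (fun x : ℝ => x ^ p * (1 - x) ^ q) volume 0 1 := by
  have h := Complex.betaIntegral_convergent (u := p + 1) (v := q + 1)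
    (by simp; linarith) (by simp; linarith)
  have h' : IntervalIntegrable (fun x : ℝ => ((x ^ p * (1 - x) ^ q : ℝ) : ℂ)) volume 0 1 :=
    h.congr_uIoo fun x hx =>
      (ofReal_rpow_mul_one_sub_rpow (Ioo_subset_Icc_self (by simpa using hx))).symm
  exact ⟨h'.1.re, h'.2.re⟩

lemma integral_rpow_mul_one_sub_rpow {p q : ℝ} (hp : -1 < p) (hq : -1 < q) :
    ∫ x in (0 : ℝ)..1, x ^ p * (1 - x) ^ q =
      Gamma (p + 1) * Gamma (q + 1) / Gamma (p + q + 2) := by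
  have h := Complex.Gamma_mul_Gamma_eq_betaIntegral (s := p + 1) (t := q + 1)
    (by simp; linarith) (by simp; linarith)
  rw [Complex.betaIntegral, ← intervalIntegral.integral_congr
    (fun x hx => ofReal_rpow_mul_one_sub_rpow (by simpa using hx)),
    intervalIntegral.integral_ofReal] at h
  rw [eq_div_iff (Gamma_pos_of_pos (by linarith)).ne', mul_comm]
  apply Complex.ofReal_injective
  push_cast [← Complex.Gamma_ofReal]
  rw [h]
  ring_nf

lemma intervalIntegrable_rpow_mul_iteratedDeriv_one_sub_rpow {s b : ℝ} {j : ℕ} (hs : -1 < s)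
    (hb : (j : ℝ) - 1 < b) :
    IntervalIntegrable (fun x => x ^ s * iteratedDeriv j (fun y : ℝ => (1 - y) ^ b) x)
      volume 0 1 := by
  rw [iteratedDeriv_one_sub_rpow_const]
  convert (intervalIntegrable_rpow_mul_one_sub_rpow hs (by linarith : -1 < b - j)).const_mul
    ((-1) ^ j * (descPochhammer ℝ j).eval b) using 2
  ring

lemma integral_rpow_mul_iteratedDeriv_one_sub_rpow {s b : ℝ} {j : ℕ} (hs : (j : ℝ) - 1 < s)
    (hb : (j : ℝ) - 1 < b) :
    ∫ x in (0 : ℝ)..1, x ^ s * iteratedDeriv j (fun y : ℝ => (1 - y) ^ b) x =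
      (descPochhammer ℝ j).eval (j - s - 1) *
        (Gamma (s - j + 1) * Gamma (b + 1) / Gamma (s + b - j + 2)) := by
  have hΓb : (descPochhammer ℝ j).eval b * Gamma (b - j + 1) = Gamma (b + 1) :=
    (Gamma_add_one_eq_descPochhammer_mul (by linarith)).symm
  have hΓs := neg_one_pow_mul_Gamma_add_nat (c := s - j + 1) (by linarith) j
  rw [show s - j + 1 + j = s + 1 by ring, show -(s - j + 1) = j - s - 1 by ring] at hΓs
  simp only [iteratedDeriv_one_sub_rpow_const, mul_left_comm _ ((-1 : ℝ) ^ j * _),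
    intervalIntegral.integral_const_mul,
    integral_rpow_mul_one_sub_rpow (by linarith : -1 < s) (by linarith : -1 < b - j)]
  rw [← hΓb, show s + (b - j) + 2 = s + b - j + 2 by ring]
  linear_combination
    (descPochhammer ℝ j).eval b * Gamma (b - j + 1) / Gamma (s + b - j + 2) * hΓs

lemma rpow_mul_iteratedDeriv_rpow_mul_one_sub_rpow (p a b : ℝ) (m : ℕ) {x : ℝ}
    (hx : x ∈ Ioo (0 : ℝ) 1) :
    x ^ p * iteratedDeriv m (fun y : ℝ => y ^ a * (1 - y) ^ b) x = ∑ ij ∈ antidiagonal m,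
      m.choose ij.1 * (descPochhammer ℝ ij.1).eval a *
        (x ^ (a + p - ij.1) * iteratedDeriv ij.2 (fun y : ℝ => (1 - y) ^ b) x) := by
  have h₀ : ContDiffAt ℝ m (fun y : ℝ => y ^ a) x := contDiffAt_rpow_const (Or.inl hx.1.ne')
  have h₁ : ContDiffAt ℝ m (fun y : ℝ => (1 - y) ^ b) x :=
    (contDiffAt_rpow_const (Or.inl (sub_pos.2 hx.2).ne')).comp x
      (contDiffAt_const.sub contDiffAt_id)
  rw [iteratedDeriv_fun_mul h₀ h₁, ← Nat.sum_antidiagonal_eq_sum_range_succ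
    (fun i j => (m.choose i : ℝ) * iteratedDeriv i (fun y : ℝ => y ^ a) x *
      iteratedDeriv j (fun y : ℝ => (1 - y) ^ b) x), mul_sum]
  refine sum_congr rfl fun ij _ => ?_
  rw [iteratedDeriv_rpow_const, show a + p - ij.1 = p + (a - ij.1) by ring, rpow_add hx.1]
  ring

theorem integral_rpow_mul_iteratedDeriv_rpow_mul_one_sub_rpow {p a b : ℝ} {m : ℕ}
    (ha : (m : ℝ) - 1 < a + p) (hb : (m : ℝ) - 1 < b) :
    ∫ x in (0 : ℝ)..1, x ^ p * iteratedDeriv m (fun y : ℝ => y ^ a * (1 - y) ^ b) x =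
      (descPochhammer ℝ m).eval (m - p - 1) *
        (Gamma (a + p + 1 - m) * Gamma (b + 1) / Gamma (a + b + p + 2 - m)) := by
  have hexp : ∀ ij ∈ antidiagonal m, (ij.2 : ℝ) - 1 < a + p - ij.1 ∧ (ij.2 : ℝ) - 1 < b := by
    intro ij hij
    have : (ij.1 : ℝ) + ij.2 = m := by exact_mod_cast mem_antidiagonal.1 hij
    constructor <;> linarith [(ij.1.cast_nonneg : (0 : ℝ) ≤ ij.1)]
  rw [intervalIntegral.integral_congr_Ioo_of_le zero_le_one
      (fun x hx => rpow_mul_iteratedDeriv_rpow_mul_one_sub_rpow p a b m hx),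
    intervalIntegral.integral_finsetSum fun ij hij =>
      (intervalIntegrable_rpow_mul_iteratedDeriv_one_sub_rpow
        (by linarith [hexp ij hij]) (hexp ij hij).2).const_mul _]
  simp only [intervalIntegral.integral_const_mul]
  rw [show (m : ℝ) - p - 1 = a + -(a + p + 1 - m) by ring, descPochhammer_eval_add, sum_mul]
  refine sum_congr rfl fun ij hij => ?_
  have hm : (ij.1 : ℝ) + ij.2 = m := by exact_mod_cast mem_antidiagonal.1 hij
  rw [integral_rpow_mul_iteratedDeriv_one_sub_rpow (hexp ij hij).1 (hexp ij hij).2, ← hm]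
  ring_nf

lemma rpow_mul_one_sub_rpow_mul_altJacobi (α β : ℝ) (n k : ℕ) {x : ℝ}
    (hx : x ∈ Ioo (0 : ℝ) 1) :
    x ^ α * (1 - x) ^ β * altJacobi α β n k x =
      x ^ (-(k : ℝ) - 1) * iteratedDeriv (n - k)
        (fun y : ℝ => y ^ (α + n + k + 1 : ℝ) * (1 - y) ^ (β + n - k : ℝ)) x /
          (n - k).factorial := by
  have h₀ : x ^ α * x ^ (-α - k - 1 : ℝ) = x ^ (-(k : ℝ) - 1) := by
    rw [← rpow_add hx.1]; ring_nf
  have h₁ : (1 - x) ^ β * (1 - x) ^ (-β) = 1 := by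
    rw [← rpow_add (sub_pos.2 hx.2), add_neg_cancel, rpow_zero]
  rw [altJacobi]
  generalize iteratedDeriv (n - k)
    (fun y : ℝ => y ^ (α + n + k + 1 : ℝ) * (1 - y) ^ (β + n - k : ℝ)) x = D
  calc _ = x ^ α * x ^ (-α - k - 1 : ℝ) * ((1 - x) ^ β * (1 - x) ^ (-β)) * D /
        (n - k).factorial := by ring
    _ = _ := by rw [h₀, h₁, mul_one]

theorem stmt_6 (n k : ℕ) (hk : k ≤ n) (α β : ℝ) (hα : α > -1) (hβ : β > -1) :
    ∫ x in (0 : ℝ)..1, x ^ α * (1 - x) ^ β * altJacobi α β n k x =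
      (Real.Gamma (α + k + 1) / k.factorial) *
        (Real.Gamma (β + n - k + 1) / (n - k).factorial) *
        (n.factorial / Real.Gamma (α + β + n + 2)) := by
  have hm : ((n - k : ℕ) : ℝ) = n - k := Nat.cast_sub hk
  rw [intervalIntegral.integral_congr_Ioo_of_le zero_le_one
      (fun x hx => rpow_mul_one_sub_rpow_mul_altJacobi α β n k hx),
    intervalIntegral.integral_div,
    integral_rpow_mul_iteratedDeriv_rpow_mul_one_sub_rpow (by rw [hm]; linarith)
      (by rw [hm]; linarith),
    show ((n - k : ℕ) : ℝ) - (-(k : ℝ) - 1) - 1 = n by rw [hm]; ring,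
    show α + n + k + 1 + (-(k : ℝ) - 1) + 1 - ((n - k : ℕ) : ℝ) = α + k + 1 by rw [hm]; ring,
    show α + n + k + 1 + (β + n - k) + (-(k : ℝ) - 1) + 2 - ((n - k : ℕ) : ℝ) = α + β + n + 2 by
      rw [hm]; ring,
    descPochhammer_eval_eq_descFactorial]
  have hfac : (k.factorial : ℝ) * n.descFactorial (n - k) = n.factorial := by
    exact_mod_cast Nat.sub_sub_self hk ▸ Nat.factorial_mul_descFactorial (Nat.sub_le n k)
  have hΓ : Gamma (α + β + n + 2) ≠ 0 :=
    (Gamma_pos_of_pos (by linarith [n.cast_nonneg (α := ℝ)])).ne'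
  field_simp
  linear_combination Gamma (α + k + 1) * Gamma (β + n - k + 1) * hfac
end

section
/- For integers 0 ≤ k ≤ n, y(x) = P_{nk}^{(α,β)}(x) solves the second-order differential equation x²(1-x) y'' + x[α+2-(α+β+3)x] y' - [k(α+k+1) - n(α+β+n+2)x] y = 0 on (0,1). -/
open Real MeasureTheory

/-!
With `p = α + n + k + 1` and `q = β + n - k`, the weight `u = x^p (1 - x)^q` satisfies the
first-order equation `x (1 - x) u' = (p - (p + q) x) u`. Differentiating it `n - k + 1` times
(Leibniz) shows that `v = u⁽ⁿ⁻ᵏ⁾` solves a hypergeometric equation. Since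
`P_{nk} = x^(-α-k-1) (1 - x)^(-β) v / (n - k)!`, the operator of the theorem applied to `P_{nk}`
is `x^(-α-k) (1 - x)^(-β) / (n - k)!` times that hypergeometric equation, hence vanishes.
-/

open Set
open scoped ContDiff

lemma hasDerivAt_iteratedDeriv_of_contDiffOn {f : ℝ → ℝ} {s : Set ℝ} (hf : ContDiffOn ℝ ∞ f s)
    (hs : IsOpen s) {x : ℝ} (hx : x ∈ s) (j : ℕ) :
    HasDerivAt (iteratedDeriv j f) (iteratedDeriv (j + 1) f x) x := by
  have hdiff : DifferentiableAt ℝ (iteratedDerivWithin j f s) x :=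
    (hf.differentiableOn_iteratedDerivWithin (by exact_mod_cast WithTop.coe_lt_top _)
      hs.uniqueDiffOn x hx).differentiableAt (hs.mem_nhds hx)
  have hEq : iteratedDerivWithin j f s =ᶠ[nhds x] iteratedDeriv j f :=
    Filter.eventually_of_mem (hs.mem_nhds hx) fun y hy => iteratedDerivWithin_of_isOpen hs hy
  rw [iteratedDeriv_succ]
  exact (hdiff.congr_of_eventuallyEq hEq.symm).hasDerivAt

lemma HasDerivAt.eq_zero_of_eqOn_zero {g : ℝ → ℝ} {g' x : ℝ} {s : Set ℝ} (hg : HasDerivAt g g' x)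
    (hs : IsOpen s) (hx : x ∈ s) (hzero : EqOn g 0 s) : g' = 0 :=
  hg.unique <| (hasDerivAt_const x (0 : ℝ)).congr_of_eventuallyEq <|
    hzero.eventuallyEq_of_mem (hs.mem_nhds hx)

theorem iteratedDeriv_hypergeometric_of_mul_deriv {f : ℝ → ℝ} {s : Set ℝ} (hf : ContDiffOn ℝ ∞ f s)
    (hs : IsOpen s) {p r : ℝ} (hrel : ∀ y ∈ s, y * (1 - y) * deriv f y = (p - r * y) * f y)
    (j : ℕ) {x : ℝ} (hx : x ∈ s) :
    x * (1 - x) * iteratedDeriv (j + 2) f x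
      + ((j + 1) * (1 - 2 * x) - (p - r * x)) * iteratedDeriv (j + 1) f x
      + (j + 1) * (r - j) * iteratedDeriv j f x = 0 := by
  induction j generalizing x with
  | zero =>
    have hD := fun i => hasDerivAt_iteratedDeriv_of_contDiffOn hf hs hx i
    have h := ((((hasDerivAt_id' x).mul ((hasDerivAt_id' x).const_sub 1)).mul (hD 1)).sub
      (((hasDerivAt_id' x).const_mul r).const_sub p |>.mul (hD 0))).eq_zero_of_eqOn_zero hs hx
      (fun y hy => by simp [← hrel y hy, iteratedDeriv_one])
    simp only [iteratedDeriv_zero, Pi.mul_apply] at h ⊢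
    push_cast
    linear_combination h
  | succ j ih =>
    have hD := fun i => hasDerivAt_iteratedDeriv_of_contDiffOn hf hs hx i
    have h := ((((hasDerivAt_id' x).mul ((hasDerivAt_id' x).const_sub 1)).mul (hD (j + 2))).add
      ((((hasDerivAt_id' x).const_mul 2).const_sub 1 |>.const_mul ((j : ℝ) + 1) |>.sub
        (((hasDerivAt_id' x).const_mul r).const_sub p)).mul (hD (j + 1))) |>.add
      ((hD j).const_mul (((j : ℝ) + 1) * (r - j)))).eq_zero_of_eqOn_zero hs hx
      (fun y hy => by simpa using ih hy)
    simp only [Pi.mul_apply, Pi.sub_apply, show j + 1 + 2 = j + 2 + 1 from rfl,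
      show j + 1 + 1 = j + 2 from rfl] at h ⊢
    push_cast
    linear_combination h

noncomputable def jacobiWeight (p q x : ℝ) : ℝ := x ^ p * (1 - x) ^ q

section jacobiWeight

variable {p q x : ℝ}

lemma contDiffOn_jacobiWeight : ContDiffOn ℝ ∞ (jacobiWeight p q) (Ioo 0 1) := fun x hx =>
  ((contDiffAt_rpow_const_of_ne hx.1.ne').mul
    ((contDiffAt_rpow_const_of_ne (sub_pos.2 hx.2).ne').comp x
      (contDiffAt_const.sub contDiffAt_id))).contDiffWithinAt

lemma hasDerivAt_jacobiWeight (hx : x ∈ Ioo 0 1) :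
    HasDerivAt (jacobiWeight p q) (jacobiWeight p q x * (p / x - q / (1 - x))) x := by
  have hx0 := hx.1.ne'
  have hx1 := (sub_pos.2 hx.2).ne'
  refine ((hasDerivAt_rpow_const (p := p) (Or.inl hx0)).mul
    (((hasDerivAt_id' x).const_sub 1).rpow_const (p := q) (Or.inl hx1))).congr_deriv ?_
  simp only [jacobiWeight, rpow_sub_one hx0, rpow_sub_one hx1]
  field_simp
  ring

lemma mul_deriv_jacobiWeight (hx : x ∈ Ioo 0 1) :
    x * (1 - x) * deriv (jacobiWeight p q) x = (p - (p + q) * x) * jacobiWeight p q x := by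
  rw [(hasDerivAt_jacobiWeight hx).deriv]
  have := (sub_pos.2 hx.2).ne'
  field_simp [hx.1.ne']
  ring

lemma HasDerivAt.jacobiWeight_mul {v : ℝ → ℝ} {d : ℝ} (hx : x ∈ Ioo 0 1) (hv : HasDerivAt v d x) :
    HasDerivAt (fun y => jacobiWeight p q y * v y)
      (jacobiWeight p q x * ((p / x - q / (1 - x)) * v x + d)) x := by
  refine ((hasDerivAt_jacobiWeight hx).mul hv).congr_deriv ?_
  ring

lemma hasDerivAt_deriv_jacobiWeight_mul {v v' : ℝ → ℝ} {d : ℝ} (hx : x ∈ Ioo 0 1)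
    (hv : ∀ y ∈ Ioo 0 1, HasDerivAt v (v' y) y) (hv' : HasDerivAt v' d x) :
    HasDerivAt (deriv fun y => jacobiWeight p q y * v y)
      (jacobiWeight p q x * ((p / x - q / (1 - x)) * ((p / x - q / (1 - x)) * v x + v' x)
        + ((-p / x ^ 2 - q / (1 - x) ^ 2) * v x + (p / x - q / (1 - x)) * v' x + d))) x := by
  have hderiv : (deriv fun y => jacobiWeight p q y * v y) =ᶠ[nhds x]
      fun y => jacobiWeight p q y * ((p / y - q / (1 - y)) * v y + v' y) :=
    Filter.eventually_of_mem (isOpen_Ioo.mem_nhds hx) fun y hy =>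
      ((hv y hy).jacobiWeight_mul hy).deriv
  have hlog : HasDerivAt (fun y => p / y - q / (1 - y)) (-p / x ^ 2 - q / (1 - x) ^ 2) x := by
    refine ((hasDerivAt_const x p).fun_div (hasDerivAt_id' x) hx.1.ne' |>.sub
      ((hasDerivAt_const x q).fun_div ((hasDerivAt_id' x).const_sub 1)
        (sub_pos.2 hx.2).ne')).congr_deriv ?_
    ring
  exact (((hlog.mul (hv x hx)).add hv').jacobiWeight_mul hx).congr_of_eventuallyEq hderiv

end jacobiWeight

lemma altJacobi_eq_jacobiWeight_mul (α β : ℝ) (n k : ℕ) :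
    altJacobi α β n k = fun y => jacobiWeight (-α - k - 1) (-β) y *
      (iteratedDeriv (n - k) (jacobiWeight (α + n + k + 1) (β + n - k)) y / (n - k).factorial) := by
  funext y
  unfold altJacobi jacobiWeight
  ring

theorem stmt_12_general (n k : ℕ) (hk : k ≤ n) (α β : ℝ)
    (x : ℝ) (hx : x ∈ Set.Ioo (0 : ℝ) 1) :
    x ^ 2 * (1 - x) * iteratedDeriv 2 (altJacobi α β n k) x +
      x * (α + 2 - (α + β + 3) * x) * deriv (altJacobi α β n k) x -
      ((k : ℝ) * (α + k + 1) - n * (α + β + n + 2) * x) * altJacobi α β n k x = 0 := by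
  set f := jacobiWeight (α + n + k + 1) (β + n - k)
  set v : ℕ → ℝ → ℝ := fun j y => iteratedDeriv j f y / (n - k).factorial
  have hf : ContDiffOn ℝ ∞ f (Ioo 0 1) := contDiffOn_jacobiWeight
  have hv : ∀ j, ∀ y ∈ Ioo (0 : ℝ) 1, HasDerivAt (v j) (v (j + 1) y) y := fun j y hy =>
    (hasDerivAt_iteratedDeriv_of_contDiffOn hf isOpen_Ioo hy j).div_const _
  have hode := iteratedDeriv_hypergeometric_of_mul_deriv hf isOpen_Ioo
    (fun y hy => mul_deriv_jacobiWeight hy) (n - k) hx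
  rw [iteratedDeriv_succ, iteratedDeriv_one, altJacobi_eq_jacobiWeight_mul,
    (hasDerivAt_deriv_jacobiWeight_mul hx (hv (n - k)) (hv (n - k + 1) x hx)).deriv,
    ((hv (n - k) x hx).jacobiWeight_mul hx).deriv]
  simp only [v, Nat.cast_sub hk] at hode ⊢
  have hx0 := hx.1.ne'
  have hx1 := (sub_pos.2 hx.2).ne'
  field_simp
  linear_combination jacobiWeight (-α - k - 1) (-β) x * x * (1 - x) * hode

theorem stmt_12 (n k : ℕ) (hk : k ≤ n) (α β : ℝ) (hα : α > -1) (hβ : β > -1)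
    (x : ℝ) (hx : x ∈ Set.Ioo (0 : ℝ) 1) :
    x ^ 2 * (1 - x) * iteratedDeriv 2 (altJacobi α β n k) x +
      x * (α + 2 - (α + β + 3) * x) * deriv (altJacobi α β n k) x -
      ((k : ℝ) * (α + k + 1) - n * (α + β + n + 2) * x) * altJacobi α β n k x = 0 :=
  stmt_12_general n k hk α β x hx
end

section
/- For integers 0 ≤ k ≤ n, y(x) = A_{nk}(x) solves the differential equation x²(1-x) y'' + x(1-2x) y' - [k² - n(n+1)x] y = 0 on (0,1). -/
/-!
Write `θ = x d/dx`. The operator `x²(1-x) y'' + x(1-2x) y'` is `θ² - x θ(θ+1)`, so it sends `x^p`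
to `p² x^p - p(p+1) x^(p+1)`. Applied to `A_{nk} = ∑ c_j x^(k+j)`, the whole left-hand side becomes
`∑_j (c_j j(2k+j) x^(k+j) + c_j (n-k-j)(n+k+j+1) x^(k+j+1))`, and the recurrence
`c_{j+1} (j+1)(2k+j+1) = -c_j (n-k-j)(n+k+j+1)` of the coefficients makes this sum telescope to
zero.
-/

open Real MeasureTheory

/-- A-kind orthogonal polynomials. -/
noncomputable def aKind (n k : ℕ) (x : ℝ) : ℝ :=
  ∑ j ∈ Finset.range (n - k + 1),
    (-1 : ℝ) ^ j * ((n - k).choose j : ℝ) * ((n + k + j).choose (n - k) : ℝ) * x ^ (k + j)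

open Finset

theorem Nat.cast_choose_succ_right_mul {R : Type*} [Ring R] (m j : ℕ) :
    (m.choose (j + 1) : R) * (j + 1) = m.choose j * (m - j) := by
  rcases le_or_gt j m with h | h
  · have := congrArg (Nat.cast (R := R)) (Nat.choose_succ_right_eq m j)
    push_cast [Nat.cast_sub h] at this
    exact this
  · simp [Nat.choose_eq_zero_of_lt h, Nat.choose_eq_zero_of_lt (h.trans (Nat.lt_succ_self j))]

theorem Nat.cast_choose_succ_mul {R : Type*} [Ring R] (N m : ℕ) :
    ((N + 1).choose m : R) * (N + 1 - m) = N.choose m * (N + 1) := by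
  rcases le_or_gt m (N + 1) with h | h
  · have := congrArg (Nat.cast (R := R)) (Nat.choose_mul_succ_eq N m)
    push_cast [Nat.cast_sub h] at this
    exact this.symm
  · simp [Nat.choose_eq_zero_of_lt h, Nat.choose_eq_zero_of_lt ((Nat.lt_succ_self N).trans h)]

theorem iteratedDeriv_sum_mul_pow {𝕜 : Type*} [NontriviallyNormedField 𝕜] (i : ℕ) (s : Finset ℕ)
    (c : ℕ → 𝕜) (e : ℕ → ℕ) (x : 𝕜) :
    iteratedDeriv i (fun y => ∑ j ∈ s, c j * y ^ e j) x =
      ∑ j ∈ s, c j * ((e j).descFactorial i * x ^ (e j - i)) := by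
  rw [iteratedDeriv_fun_sum fun j _ => (contDiff_const.mul (contDiff_id.pow _)).contDiffAt]
  simp

noncomputable def principalOp (f : ℝ → ℝ) (x : ℝ) : ℝ :=
  x ^ 2 * (1 - x) * iteratedDeriv 2 f x + x * (1 - 2 * x) * deriv f x

theorem principalOp_sum_mul_pow (s : Finset ℕ) (c : ℕ → ℝ) (e : ℕ → ℕ) (x : ℝ) :
    principalOp (fun y => ∑ j ∈ s, c j * y ^ e j) x =
      ∑ j ∈ s, c j * ((e j : ℝ) ^ 2 * x ^ e j - e j * (e j + 1) * x ^ (e j + 1)) := by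
  have hmonomial (p : ℕ) :
      x ^ 2 * (1 - x) * (p.descFactorial 2 * x ^ (p - 2)) +
        x * (1 - 2 * x) * (p.descFactorial 1 * x ^ (p - 1)) =
        (p : ℝ) ^ 2 * x ^ p - p * (p + 1) * x ^ (p + 1) := by
    rcases p with _ | _ | q <;>
      simp only [Nat.descFactorial, Nat.cast_mul, Nat.cast_add, Nat.cast_one, Nat.cast_zero,
        Nat.reduceSubDiff, zero_tsub, add_tsub_cancel_right, tsub_zero] <;> ring
  rw [principalOp, ← iteratedDeriv_one, iteratedDeriv_sum_mul_pow, iteratedDeriv_sum_mul_pow,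
    mul_sum, mul_sum, ← sum_add_distrib]
  refine sum_congr rfl fun j _ => ?_
  rw [← hmonomial]
  ring

noncomputable def aKindCoeff (n k j : ℕ) : ℝ :=
  (-1 : ℝ) ^ j * ((n - k).choose j : ℝ) * ((n + k + j).choose (n - k) : ℝ)

theorem aKind_eq_sum (n k : ℕ) :
    aKind n k = fun x => ∑ j ∈ range (n - k + 1), aKindCoeff n k j * x ^ (k + j) := rfl

theorem aKindCoeff_succ_mul {n k : ℕ} (hk : k ≤ n) (j : ℕ) :
    aKindCoeff n k (j + 1) * ((j + 1) * (2 * k + j + 1)) =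
      -aKindCoeff n k j * ((n - k - j) * (n + k + j + 1)) := by
  have h₁ := Nat.cast_choose_succ_right_mul (R := ℝ) (n - k) j
  have h₂ := Nat.cast_choose_succ_mul (R := ℝ) (n + k + j) (n - k)
  simp only [aKindCoeff, Nat.cast_sub hk, ← add_assoc] at *
  push_cast at h₁ h₂
  linear_combination (-(-1 : ℝ) ^ j * (n + k + j + 1).choose (n - k) * (2 * k + j + 1)) * h₁ +
    (-(-1 : ℝ) ^ j * (n - k).choose j * (n - k - j)) * h₂

theorem stmt_16_general (n k : ℕ) (hk : k ≤ n) (x : ℝ) :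
    x ^ 2 * (1 - x) * iteratedDeriv 2 (aKind n k) x +
      x * (1 - 2 * x) * deriv (aKind n k) x -
      ((k : ℝ) ^ 2 - n * (n + 1) * x) * aKind n k x = 0 := by
  set b : ℕ → ℝ := fun j => aKindCoeff n k j * (j * (2 * k + j)) * x ^ (k + j)
  have hterm (j : ℕ) :
      aKindCoeff n k j * (((k + j : ℕ) : ℝ) ^ 2 * x ^ (k + j) -
        (k + j : ℕ) * ((k + j : ℕ) + 1) * x ^ (k + j + 1)) -
        ((k : ℝ) ^ 2 - n * (n + 1) * x) * (aKindCoeff n k j * x ^ (k + j)) = b j - b (j + 1) := by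
    simp only [b]
    push_cast
    linear_combination x ^ (k + j + 1) * aKindCoeff_succ_mul hk j
  change principalOp (aKind n k) x - _ = 0
  rw [aKind_eq_sum, principalOp_sum_mul_pow, mul_sum, ← sum_sub_distrib,
    sum_congr rfl fun j _ => hterm j, sum_range_sub']
  -- `b 0` carries the factor `j = 0`, and `b (n - k + 1)` the factor `(n - k).choose (n - k + 1) = 0`.
  simp [b, aKindCoeff]

theorem stmt_16 (n k : ℕ) (hk : k ≤ n) (x : ℝ) (hx : x ∈ Set.Ioo (0 : ℝ) 1) :
    x ^ 2 * (1 - x) * iteratedDeriv 2 (aKind n k) x +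
      x * (1 - 2 * x) * deriv (aKind n k) x -
      ((k : ℝ) ^ 2 - n * (n + 1) * x) * aKind n k x = 0 :=
  stmt_16_general n k hk x
end
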